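/- arXiv:1803.02459 — 10 statements merged into one kernel-verified Lean document; each statement's English description precedes it below -/
import Mathlib

section
/- Let H be a finite-dimensional reproducing kernel Hilbert space with kernel basis {k_x}. Then δ_H(x,y) := sqrt(1 - |⟨k_x,k_y⟩|²/(⟨k_x,k_x⟩⟨k_y,k_y⟩)) equals the operator norm ‖P_x - P_y‖, where P_x, P_y are the orthogonal projections onto the spans of k_x and k_y. -/
/-!
`D = P_x - P_y` is self-adjoint, and a direct computation gives `D² k_x = δ² k_x` and
`D² k_y = δ² k_y`, while `D` vanishes on `span {k_x, k_y}ᗮ`. Hence `D² = δ² R` with `R` the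
orthogonal projection onto `span {k_x, k_y}`, and the C⋆-identity `‖D‖² = ‖D²‖` gives
`‖D‖² = δ² ‖R‖ = δ²`.
-/

/-- The orthogonal projection of a Hilbert space onto the span of a vector,
viewed as an operator on the whole space. -/
noncomputable def projOnSpan {H : Type*} [NormedAddCommGroup H] [InnerProductSpace ℂ H]
    [FiniteDimensional ℂ H] (v : H) : H →L[ℂ] H :=
  (Submodule.span ℂ {v}).subtypeL.comp (Submodule.orthogonalProjection (Submodule.span ℂ {v}))

open Submodule
open scoped InnerProductSpace

section

variable {𝕜 E : Type*} [RCLike 𝕜] [NormedAddCommGroup E] [InnerProductSpace 𝕜 E]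

theorem starProjection_singleton_apply_starProjection_singleton_apply (u v : E) :
    (𝕜 ∙ u).starProjection ((𝕜 ∙ v).starProjection u) =
      ((‖⟪u, v⟫_𝕜‖ ^ 2 / (‖u‖ ^ 2 * ‖v‖ ^ 2) : ℝ) : 𝕜) • u := by
  have hinner : ⟪v, u⟫_𝕜 * ⟪u, v⟫_𝕜 = (‖⟪u, v⟫_𝕜‖ : 𝕜) ^ 2 := by
    rw [← RCLike.conj_mul, inner_conj_symm]
  rw [starProjection_singleton 𝕜 (v := v) u, map_smul, starProjection_singleton, smul_smul]
  congr 1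
  push_cast
  rw [← hinner]
  ring

theorem starProjection_sub_mul_self_apply_of_mem {U V : Submodule 𝕜 E}
    [U.HasOrthogonalProjection] [V.HasOrthogonalProjection] {u : E} (hu : u ∈ U) :
    ((U.starProjection - V.starProjection) * (U.starProjection - V.starProjection)) u =
      u - U.starProjection (V.starProjection u) := by
  have hV : V.starProjection (V.starProjection u) = V.starProjection u :=
    congr($(V.isIdempotentElem_starProjection) u)
  simp [starProjection_eq_self_iff.mpr hu, hV]

theorem starProjection_singleton_sub_mul_self_apply_of_mem_sup {u v w : E}
    (hw : w ∈ 𝕜 ∙ u ⊔ 𝕜 ∙ v) :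
    (((𝕜 ∙ u).starProjection - (𝕜 ∙ v).starProjection) *
        ((𝕜 ∙ u).starProjection - (𝕜 ∙ v).starProjection)) w =
      ((1 - ‖⟪u, v⟫_𝕜‖ ^ 2 / (‖u‖ ^ 2 * ‖v‖ ^ 2) : ℝ) : 𝕜) • w := by
  set D := (𝕜 ∙ u).starProjection - (𝕜 ∙ v).starProjection
  have hDu : (D * D) u = ((1 - ‖⟪u, v⟫_𝕜‖ ^ 2 / (‖u‖ ^ 2 * ‖v‖ ^ 2) : ℝ) : 𝕜) • u := by
    rw [starProjection_sub_mul_self_apply_of_mem (mem_span_singleton_self u),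
      starProjection_singleton_apply_starProjection_singleton_apply]
    push_cast
    rw [sub_smul, one_smul]
  have hDv : (D * D) v = ((1 - ‖⟪u, v⟫_𝕜‖ ^ 2 / (‖u‖ ^ 2 * ‖v‖ ^ 2) : ℝ) : 𝕜) • v := by
    have hswap : D * D = ((𝕜 ∙ v).starProjection - (𝕜 ∙ u).starProjection) *
        ((𝕜 ∙ v).starProjection - (𝕜 ∙ u).starProjection) := by
      rw [← neg_sub, neg_mul_neg]
    rw [hswap, starProjection_sub_mul_self_apply_of_mem (mem_span_singleton_self v),
      starProjection_singleton_apply_starProjection_singleton_apply, norm_inner_symm,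
      mul_comm (‖v‖ ^ 2)]
    push_cast
    rw [sub_smul, one_smul]
  rw [← span_insert, mem_span_pair] at hw
  obtain ⟨a, b, rfl⟩ := hw
  simp only [map_add, map_smul, hDu, hDv, smul_comm a, smul_comm b, smul_add]

theorem starProjection_singleton_sub_mul_self (u v : E) :
    ((𝕜 ∙ u).starProjection - (𝕜 ∙ v).starProjection) *
        ((𝕜 ∙ u).starProjection - (𝕜 ∙ v).starProjection) =
      ((1 - ‖⟪u, v⟫_𝕜‖ ^ 2 / (‖u‖ ^ 2 * ‖v‖ ^ 2) : ℝ) : 𝕜) • (𝕜 ∙ u ⊔ 𝕜 ∙ v).starProjection := by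
  set D := (𝕜 ∙ u).starProjection - (𝕜 ∙ v).starProjection
  have hDR : D * (𝕜 ∙ u ⊔ 𝕜 ∙ v).starProjection = D := by
    simp only [D, sub_mul]
    rw [ContinuousLinearMap.mul_def, ContinuousLinearMap.mul_def,
      starProjection_comp_starProjection_of_le le_sup_left,
      starProjection_comp_starProjection_of_le le_sup_right]
  ext w
  calc (D * D) w = (D * D) ((𝕜 ∙ u ⊔ 𝕜 ∙ v).starProjection w) :=
        congrArg D congr($hDR w).symm
    _ = _ := starProjection_singleton_sub_mul_self_apply_of_mem_sup (starProjection_apply_mem _ w)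

theorem one_sub_norm_inner_sq_div_nonneg (u v : E) :
    0 ≤ 1 - ‖⟪u, v⟫_𝕜‖ ^ 2 / (‖u‖ ^ 2 * ‖v‖ ^ 2) := by
  rw [sub_nonneg, ← mul_pow]
  exact div_le_one_of_le₀ (pow_le_pow_left₀ (norm_nonneg _) (norm_inner_le_norm u v) 2)
    (by positivity)

theorem norm_starProjection_singleton_sub [CompleteSpace E] {u : E} (hu : u ≠ 0) (v : E) :
    ‖(𝕜 ∙ u).starProjection - (𝕜 ∙ v).starProjection‖ =
      √(1 - ‖⟪u, v⟫_𝕜‖ ^ 2 / (‖u‖ ^ 2 * ‖v‖ ^ 2)) := by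
  have hD : IsSelfAdjoint ((𝕜 ∙ u).starProjection - (𝕜 ∙ v).starProjection) :=
    (isSelfAdjoint_starProjection _).sub (isSelfAdjoint_starProjection _)
  have hR : ‖(𝕜 ∙ u ⊔ 𝕜 ∙ v).starProjection‖ = 1 :=
    norm_starProjection _
      ((Submodule.ne_bot_iff _).mpr ⟨u, mem_sup_left (mem_span_singleton_self u), hu⟩)
  rw [← Real.sqrt_sq (norm_nonneg _), ← hD.norm_mul_self, starProjection_singleton_sub_mul_self,
    norm_smul, hR, mul_one, RCLike.norm_ofReal,
    abs_of_nonneg (one_sub_norm_inner_sq_div_nonneg u v)]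

end

/-- For linearly independent kernel vectors `k_x, k_y` in a finite-dimensional RKHS,
`δ_H(x,y) = √(1 - |⟨k_x,k_y⟩|²/(⟨k_x,k_x⟩⟨k_y,k_y⟩))` equals the operator norm
`‖P_x - P_y‖` of the difference of the orthogonal projections onto their spans. -/
theorem deltaH_eq_norm_proj_sub {H : Type*} [NormedAddCommGroup H] [InnerProductSpace ℂ H]
    [FiniteDimensional ℂ H] (kx ky : H)
    (hind : LinearIndependent ℂ ![kx, ky]) :
    Real.sqrt (1 - (‖(inner ℂ kx ky : ℂ)‖) ^ 2 / (‖kx‖ ^ 2 * ‖ky‖ ^ 2)) =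
      ‖projOnSpan kx - projOnSpan ky‖ := by
  have : CompleteSpace H := FiniteDimensional.complete ℂ H
  have hproj (v : H) : projOnSpan v = (ℂ ∙ v).starProjection := rfl
  have hkx : kx ≠ 0 := by simpa using hind.ne_zero 0
  rw [hproj, hproj, norm_starProjection_singleton_sub hkx]
end

section
/- Suppose for i,j ∈ {1,2,3}, δ_ij ∈ (0,1) and k̂_ij ∈ ℂ satisfy δ_ij² = 1 - |k̂_ij|², with k̂_ij ≠ 0. Then the inequality |δ_12 - δ_13|/(1 - δ_12 δ_13) ≤ δ_23 ≤ (δ_12 + δ_13)/(1 + δ_12 δ_13) is equivalent to |1 - |k̂_21 k̂_13 / k̂_23|| ≤ δ_12 δ_13. -/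
/-!
Write `x, y, z` for `δ₁₂, δ₁₃, δ₂₃`. Since `|k̂₂₁ k̂₁₃|² = (1 - x²)(1 - y²)` and
`|k̂₂₃|² = 1 - z²`, after squaring both conditions say
`(1 - xy)² (1 - z²) ≤ (1 - x²)(1 - y²) ≤ (1 + xy)² (1 - z²)`; for the triangle side
this comes from the identities `(1 ∓ xy)² - (x ∓ y)² = (1 - x²)(1 - y²)`.
-/

lemma abs_sub_div_one_sub_mul_le_iff {x y z : ℝ} (hz : 0 ≤ z) (hxy : x * y < 1) :
    |x - y| / (1 - x * y) ≤ z ↔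
      (1 - x * y) ^ 2 * (1 - z ^ 2) ≤ (1 - x ^ 2) * (1 - y ^ 2) := by
  have hpos : 0 < 1 - x * y := sub_pos.2 hxy
  have key : (1 - x * y) ^ 2 * (1 - z ^ 2) - (1 - x ^ 2) * (1 - y ^ 2)
      = (x - y) ^ 2 - (z * (1 - x * y)) ^ 2 := by ring
  rw [div_le_iff₀ hpos, ← sq_le_sq₀ (abs_nonneg _) (by positivity), sq_abs, ← sub_nonpos,
    ← key, sub_nonpos]

lemma le_add_div_one_add_mul_iff {x y z : ℝ} (hz : 0 ≤ z) (hs : 0 ≤ x + y)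
    (hp : -1 < x * y) :
    z ≤ (x + y) / (1 + x * y) ↔
      (1 - x ^ 2) * (1 - y ^ 2) ≤ (1 + x * y) ^ 2 * (1 - z ^ 2) := by
  have hpos : 0 < 1 + x * y := by linarith
  have key : (1 - x ^ 2) * (1 - y ^ 2) - (1 + x * y) ^ 2 * (1 - z ^ 2)
      = (z * (1 + x * y)) ^ 2 - (x + y) ^ 2 := by ring
  rw [le_div_iff₀ hpos, ← sq_le_sq₀ (by positivity) hs, ← sub_nonpos, ← key, sub_nonpos]

lemma abs_one_sub_div_le_iff {m c t : ℝ} (hm : 0 ≤ m) (hc : 0 < c) (ht : |t| ≤ 1) :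
    |1 - m / c| ≤ t ↔ ((1 - t) * c) ^ 2 ≤ m ^ 2 ∧ m ^ 2 ≤ ((1 + t) * c) ^ 2 := by
  obtain ⟨ht₁, ht₂⟩ := abs_le.1 ht
  have lower : 1 - m / c ≤ t ↔ (1 - t) * c ≤ m := by
    rw [← le_div_iff₀ hc]; constructor <;> intro <;> linarith
  have upper : -t ≤ 1 - m / c ↔ m ≤ (1 + t) * c := by
    rw [← div_le_iff₀ hc]; constructor <;> intro <;> linarith
  rw [abs_le, and_comm, lower, upper, sq_le_sq₀ (by nlinarith) hm, sq_le_sq₀ hm (by nlinarith)]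

theorem sti_iff_gram_general (δ12 δ13 δ23 : ℝ) (k21 k13 k23 : ℂ)
    (h12 : 0 < δ12) (h12' : δ12 < 1) (h13 : 0 < δ13) (h13' : δ13 < 1)
    (h23 : 0 < δ23)
    (hk23 : k23 ≠ 0)
    (e12 : δ12 ^ 2 = 1 - ‖k21‖ ^ 2)
    (e13 : δ13 ^ 2 = 1 - ‖k13‖ ^ 2)
    (e23 : δ23 ^ 2 = 1 - ‖k23‖ ^ 2) :
    (|δ12 - δ13| / (1 - δ12 * δ13) ≤ δ23 ∧ δ23 ≤ (δ12 + δ13) / (1 + δ12 * δ13)) ↔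
      |1 - ‖k21 * k13 / k23‖| ≤ δ12 * δ13 := by
  have hprod₀ : 0 < δ12 * δ13 := mul_pos h12 h13
  have hprod₁ : δ12 * δ13 < 1 := mul_lt_one_of_nonneg_of_lt_one_left h12.le h12' h13'.le
  have ha : ‖k21‖ ^ 2 = 1 - δ12 ^ 2 := by linarith
  have hb : ‖k13‖ ^ 2 = 1 - δ13 ^ 2 := by linarith
  have hc : ‖k23‖ ^ 2 = 1 - δ23 ^ 2 := by linarith
  rw [abs_sub_div_one_sub_mul_le_iff h23.le hprod₁,
    le_add_div_one_add_mul_iff h23.le (by positivity) (by linarith), norm_div, norm_mul,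
    abs_one_sub_div_le_iff (by positivity) (norm_pos_iff.2 hk23)
      (abs_le.2 ⟨by linarith, hprod₁.le⟩),
    mul_pow, mul_pow, mul_pow, ha, hb, hc]

/-- Equivalence of the strengthened triangle inequality for the `δ`'s with a Gram-entry
inequality: given `δ_ij ∈ (0,1)` and nonzero normalized kernel entries `k̂_ij` with
`δ_ij² = 1 - |k̂_ij|²`, the inequality
`|δ₁₂-δ₁₃|/(1-δ₁₂δ₁₃) ≤ δ₂₃ ≤ (δ₁₂+δ₁₃)/(1+δ₁₂δ₁₃)` holds iff
`|1 - |k̂₂₁k̂₁₃/k̂₂₃|| ≤ δ₁₂δ₁₃`. -/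
theorem sti_iff_gram (δ12 δ13 δ23 : ℝ) (k21 k13 k23 : ℂ)
    (h12 : 0 < δ12) (h12' : δ12 < 1) (h13 : 0 < δ13) (h13' : δ13 < 1)
    (h23 : 0 < δ23) (h23' : δ23 < 1)
    (hk21 : k21 ≠ 0) (hk13 : k13 ≠ 0) (hk23 : k23 ≠ 0)
    (e12 : δ12 ^ 2 = 1 - ‖k21‖ ^ 2)
    (e13 : δ13 ^ 2 = 1 - ‖k13‖ ^ 2)
    (e23 : δ23 ^ 2 = 1 - ‖k23‖ ^ 2) :
    (|δ12 - δ13| / (1 - δ12 * δ13) ≤ δ23 ∧ δ23 ≤ (δ12 + δ13) / (1 + δ12 * δ13)) ↔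
      |1 - ‖k21 * k13 / k23‖| ≤ δ12 * δ13 :=
  sti_iff_gram_general δ12 δ13 δ23 k21 k13 k23 h12 h12' h13 h13' h23 hk23 e12 e13 e23
end

section
/- Suppose for i,j ∈ {1,2,3}, δ_ij ∈ (0,1) and nonzero complex numbers k̂_ij satisfy δ_ij² = 1 - |k̂_ij|². Then |1 - |k̂_21 k̂_13/k̂_23|| ≤ δ_12 δ_13 holds if and only if 1/|k̂_12|² + 1/|k̂_23|² + 1/|k̂_13|² - 1 ≤ 2/(|k̂_12||k̂_23||k̂_13|). -/
/-!
Write `a = ‖k̂₁₂‖`, `b = ‖k̂₂₃‖`, `c = ‖k̂₁₃‖`, so that `‖k̂₂₁k̂₁₃/k̂₂₃‖ = ac/b` and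
`(δ₁₂δ₁₃)² = (1 - a²)(1 - c²)`. Clearing the denominator `b` and squaring, the left inequality
becomes `(b - ac)² ≤ b²(1 - a²)(1 - c²)`. The difference of its two sides is
`a²b²c² (1 + 2uvw - u² - v² - w²)` with `u, v, w = 1/a, 1/b, 1/c`, the Gram determinant whose
nonnegativity is the right inequality.
-/

theorem abs_one_sub_div_le_iff_s6 {α : Type*} [Field α] [LinearOrder α] [IsStrictOrderedRing α]
    {x b d : α} (hb : 0 < b) (hd : 0 ≤ d) :
    |1 - x / b| ≤ d ↔ (b - x) ^ 2 ≤ b ^ 2 * d ^ 2 := by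
  rw [one_sub_div hb.ne', abs_div, abs_of_pos hb, div_le_iff₀ hb,
    ← sq_le_sq₀ (abs_nonneg _) (by positivity), sq_abs, mul_pow, mul_comm]

theorem one_div_sq_sum_sub_one_le_two_div_iff {α : Type*} [Field α] [LinearOrder α]
    [IsStrictOrderedRing α] {a b c : α} (ha : 0 < a) (hb : 0 < b) (hc : 0 < c) :
    1 / a ^ 2 + 1 / b ^ 2 + 1 / c ^ 2 - 1 ≤ 2 / (a * b * c) ↔
      (b - a * c) ^ 2 ≤ b ^ 2 * ((1 - a ^ 2) * (1 - c ^ 2)) := by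
  have gram : 2 / (a * b * c) - (1 / a ^ 2 + 1 / b ^ 2 + 1 / c ^ 2 - 1) =
      (b ^ 2 * ((1 - a ^ 2) * (1 - c ^ 2)) - (b - a * c) ^ 2) / (a * b * c) ^ 2 := by
    field_simp
    ring
  rw [← sub_nonneg, gram, le_div_iff₀ (by positivity), zero_mul, sub_nonneg]

theorem gram_ineq_iff_general (δ12 δ13 : ℝ) (k12 k21 k13 k23 : ℂ)
    (h12 : 0 < δ12) (h13 : 0 < δ13)
    (hk12 : k12 ≠ 0) (hk13 : k13 ≠ 0) (hk23 : k23 ≠ 0)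
    (hsym : ‖k21‖ = ‖k12‖)
    (e12 : δ12 ^ 2 = 1 - (‖k12‖) ^ 2)
    (e13 : δ13 ^ 2 = 1 - (‖k13‖) ^ 2) :
    |1 - ‖k21 * k13 / k23‖| ≤ δ12 * δ13 ↔
      1 / (‖k12‖) ^ 2 + 1 / (‖k23‖) ^ 2 + 1 / (‖k13‖) ^ 2 - 1 ≤
        2 / (‖k12‖ * ‖k23‖ * ‖k13‖) := by
  rw [norm_div, norm_mul, hsym,
    abs_one_sub_div_le_iff_s6 (norm_pos_iff.mpr hk23) (mul_pos h12 h13).le, mul_pow, e12, e13,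
    one_div_sq_sum_sub_one_le_two_div_iff (norm_pos_iff.mpr hk12) (norm_pos_iff.mpr hk23)
      (norm_pos_iff.mpr hk13)]

/-- Given `δ_ij ∈ (0,1)` and nonzero `k̂_ij` with `δ_ij² = 1 - |k̂_ij|²` (and
`|k̂₂₁| = |k̂₁₂|`), the inequality `|1 - |k̂₂₁k̂₁₃/k̂₂₃|| ≤ δ₁₂δ₁₃` is equivalent to
`1/|k̂₁₂|² + 1/|k̂₂₃|² + 1/|k̂₁₃|² - 1 ≤ 2/(|k̂₁₂||k̂₂₃||k̂₁₃|)`. -/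
theorem gram_ineq_iff (δ12 δ13 δ23 : ℝ) (k12 k21 k13 k23 : ℂ)
    (h12 : 0 < δ12) (h12' : δ12 < 1) (h13 : 0 < δ13) (h13' : δ13 < 1)
    (h23 : 0 < δ23) (h23' : δ23 < 1)
    (hk12 : k12 ≠ 0) (hk21 : k21 ≠ 0) (hk13 : k13 ≠ 0) (hk23 : k23 ≠ 0)
    (hsym : ‖k21‖ = ‖k12‖)
    (e12 : δ12 ^ 2 = 1 - (‖k12‖) ^ 2)
    (e13 : δ13 ^ 2 = 1 - (‖k13‖) ^ 2)
    (e23 : δ23 ^ 2 = 1 - (‖k23‖) ^ 2) :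
    |1 - ‖k21 * k13 / k23‖| ≤ δ12 * δ13 ↔
      1 / (‖k12‖) ^ 2 + 1 / (‖k23‖) ^ 2 + 1 / (‖k13‖) ^ 2 - 1 ≤
        2 / (‖k12‖ * ‖k23‖ * ‖k13‖) :=
  gram_ineq_iff_general δ12 δ13 k12 k21 k13 k23 h12 h13 hk12 hk13 hk23 hsym e12 e13
end

section
/- A three-point metric space ({ζ₁,ζ₂,ζ₃}, δ) with all distances in (0,1) admits an isometric embedding into the open unit disk equipped with the pseudohyperbolic metric ρ if and only if its distances satisfy the strengthened triangle inequality |δ(ζ_i,ζ_j) - δ(ζ_j,ζ_k)|/(1 - δ(ζ_i,ζ_j)δ(ζ_j,ζ_k)) ≤ δ(ζ_i,ζ_k) ≤ (δ(ζ_i,ζ_j)+δ(ζ_j,ζ_k))/(1+δ(ζ_i,ζ_j)δ(ζ_j,ζ_k)) for all permutations (i,j,k) of (1,2,3). -/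
/-- The pseudohyperbolic metric on the open unit disk. -/
noncomputable def pseudoHyp (z w : ℂ) : ℝ :=
  ‖(z - w) / (1 - (starRingEnd ℂ) w * z)‖

/-!
The identity `1 - ρ(z,w)² = (1 - |z|²)(1 - |w|²) / |1 - w̄z|²`, together with
`1 - |z||w| ≤ |1 - w̄z| ≤ 1 + |z||w|`, gives the strengthened triangle inequality when the middle
point is `0`; the Möbius map `z ↦ (z - v) / (1 - v̄z)` is a `ρ`-isometry of the disk sending `v`
to `0`, which gives it in general. Conversely, send `ζ₁ ↦ δ₁₂` and `ζ₂ ↦ 0`, and move `ζ₃` along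
the circle `|w| = δ₂₃`: `ρ(δ₁₂, w)` runs continuously from the lower bound (at `w = δ₂₃`) to the
upper bound (at `w = -δ₂₃`), so it attains `δ₁₃` by the intermediate value theorem.
-/

open Complex ComplexConjugate

lemma one_sub_conj_mul_ne_zero {z w : ℂ} (hz : ‖z‖ < 1) (hw : ‖w‖ < 1) :
    1 - conj w * z ≠ 0 := by
  refine sub_ne_zero.mpr fun h => ?_
  have : ‖conj w * z‖ < 1 := by
    rw [norm_mul, norm_conj]
    nlinarith [norm_nonneg z, norm_nonneg w]
  simp [← h] at this

lemma pseudoHyp_self (z : ℂ) : pseudoHyp z z = 0 := by simp [pseudoHyp]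

lemma pseudoHyp_comm (z w : ℂ) : pseudoHyp z w = pseudoHyp w z := by
  have : 1 - conj z * w = conj (1 - conj w * z) := by simp [mul_comm]
  rw [pseudoHyp, pseudoHyp, norm_div, norm_div, norm_sub_rev, this, norm_conj]

lemma pseudoHyp_zero_right (z : ℂ) : pseudoHyp z 0 = ‖z‖ := by simp [pseudoHyp]

lemma pseudoHyp_ofReal {x y : ℝ} (hxy : x * y < 1) :
    pseudoHyp x y = |x - y| / (1 - x * y) := by
  rw [pseudoHyp, conj_ofReal, ← ofReal_sub, ← ofReal_mul, ← ofReal_one, ← ofReal_sub,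
    ← ofReal_div, norm_real, Real.norm_eq_abs, abs_div, mul_comm y,
    abs_of_pos (sub_pos.mpr hxy)]

lemma normSq_one_sub_conj_mul_sub_normSq_sub (z w : ℂ) :
    normSq (1 - conj w * z) - normSq (z - w) = (1 - normSq z) * (1 - normSq w) := by
  simp only [normSq_apply, sub_re, sub_im, mul_re, mul_im, conj_re, conj_im, one_re, one_im]
  ring

lemma one_sub_pseudoHyp_sq {z w : ℂ} (hz : ‖z‖ < 1) (hw : ‖w‖ < 1) :
    1 - pseudoHyp z w ^ 2 = (1 - ‖z‖ ^ 2) * (1 - ‖w‖ ^ 2) / ‖1 - conj w * z‖ ^ 2 := by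
  have hD : ‖1 - conj w * z‖ ^ 2 ≠ 0 := by simp [one_sub_conj_mul_ne_zero hz hw]
  rw [pseudoHyp, norm_div, div_pow, eq_div_iff hD, sub_mul, div_mul_cancel₀ _ hD]
  simp only [← normSq_eq_norm_sq]
  linear_combination normSq_one_sub_conj_mul_sub_normSq_sub z w

lemma pseudoHyp_lt_one {z w : ℂ} (hz : ‖z‖ < 1) (hw : ‖w‖ < 1) : pseudoHyp z w < 1 := by
  have hρ : 0 ≤ pseudoHyp z w := norm_nonneg _
  have : 0 < 1 - pseudoHyp z w ^ 2 := by
    rw [one_sub_pseudoHyp_sq hz hw]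
    have := one_sub_conj_mul_ne_zero hz hw
    have : 0 < 1 - ‖z‖ ^ 2 := by nlinarith [norm_nonneg z]
    have : 0 < 1 - ‖w‖ ^ 2 := by nlinarith [norm_nonneg w]
    positivity
  nlinarith

lemma one_sub_div_one_add_mul_sq {x y : ℝ} (h : 1 + x * y ≠ 0) :
    1 - ((x + y) / (1 + x * y)) ^ 2 = (1 - x ^ 2) * (1 - y ^ 2) / (1 + x * y) ^ 2 := by
  field_simp
  ring

noncomputable def mobius (v z : ℂ) : ℂ := (z - v) / (1 - conj v * z)

lemma norm_mobius (v z : ℂ) : ‖mobius v z‖ = pseudoHyp z v := rfl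

lemma mobius_sub_mobius {v z w : ℂ} (hz : 1 - conj v * z ≠ 0) (hw : 1 - conj v * w ≠ 0) :
    mobius v z - mobius v w =
      (1 - conj v * v) * (z - w) / ((1 - conj v * z) * (1 - conj v * w)) := by
  rw [mobius, mobius, div_sub_div _ _ hz hw]
  ring

lemma one_sub_conj_mobius_mul_mobius {v z w : ℂ} (hz : 1 - conj v * z ≠ 0)
    (hw : 1 - conj v * w ≠ 0) :
    1 - conj (mobius v w) * mobius v z
      = (1 - conj v * v) * (1 - conj w * z) / (conj (1 - conj v * w) * (1 - conj v * z)) := by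
  have hw' : conj (1 - conj v * w) ≠ 0 := (map_ne_zero _).mpr hw
  rw [mobius, mobius, map_div₀, div_mul_div_comm, one_sub_div (mul_ne_zero hw' hz)]
  congr 1
  simp only [map_sub, map_mul, map_one, conj_conj]
  ring

lemma pseudoHyp_mobius {v z w : ℂ} (hv : ‖v‖ < 1) (hz : ‖z‖ < 1) (hw : ‖w‖ < 1) :
    pseudoHyp (mobius v z) (mobius v w) = pseudoHyp z w := by
  have hvz := one_sub_conj_mul_ne_zero hz hv
  have hvw := one_sub_conj_mul_ne_zero hw hv
  have hvv := norm_ne_zero_iff.mpr (one_sub_conj_mul_ne_zero hv hv)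
  rw [pseudoHyp, mobius_sub_mobius hvz hvw, one_sub_conj_mobius_mul_mobius hvz hvw, pseudoHyp]
  simp only [norm_div, norm_mul, norm_conj]
  have hvz' := norm_ne_zero_iff.mpr hvz
  have hvw' := norm_ne_zero_iff.mpr hvw
  field_simp

lemma pseudoHyp_bounds_of_norm {z w : ℂ} (hz : ‖z‖ < 1) (hw : ‖w‖ < 1) :
    |‖z‖ - ‖w‖| / (1 - ‖z‖ * ‖w‖) ≤ pseudoHyp z w ∧
      pseudoHyp z w ≤ (‖z‖ + ‖w‖) / (1 + ‖z‖ * ‖w‖) := by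
  set r := ‖z‖
  set s := ‖w‖
  have hr : 0 ≤ r := norm_nonneg z
  have hs : 0 ≤ s := norm_nonneg w
  have hρ : 0 ≤ pseudoHyp z w := norm_nonneg _
  have hrs : r * s < 1 := by nlinarith
  have hP : 0 ≤ (1 - r ^ 2) * (1 - s ^ 2) := mul_nonneg (by nlinarith) (by nlinarith)
  have hD_le : ‖1 - conj w * z‖ ≤ 1 + r * s := by
    simpa [norm_mul, mul_comm] using norm_sub_le (1 : ℂ) (conj w * z)
  have hD_ge : 1 - r * s ≤ ‖1 - conj w * z‖ := by
    simpa [norm_mul, mul_comm] using norm_sub_norm_le (1 : ℂ) (conj w * z)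
  constructor
  · -- the lower bound is the upper bound at `-‖w‖`
    have hlow : |r - s| / (1 - r * s) = |(r + -s) / (1 + r * -s)| := by
      rw [abs_div, abs_of_pos (by linarith : 0 < 1 + r * -s)]; ring_nf
    rw [hlow, ← sq_le_sq₀ (abs_nonneg _) hρ, sq_abs, ← sub_le_sub_iff_left 1,
      one_sub_pseudoHyp_sq hz hw, one_sub_div_one_add_mul_sq (by linarith), neg_sq]
    exact div_le_div_of_nonneg_left hP (by nlinarith) (by nlinarith)
  · rw [← sq_le_sq₀ hρ (by positivity), ← sub_le_sub_iff_left 1,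
      one_sub_pseudoHyp_sq hz hw, one_sub_div_one_add_mul_sq (by positivity)]
    have := one_sub_conj_mul_ne_zero hz hw
    exact div_le_div_of_nonneg_left hP (by positivity)
      (by nlinarith [norm_nonneg (1 - conj w * z)])

lemma pseudoHyp_sti {z v w : ℂ} (hz : ‖z‖ < 1) (hv : ‖v‖ < 1) (hw : ‖w‖ < 1) :
    |pseudoHyp z v - pseudoHyp v w| / (1 - pseudoHyp z v * pseudoHyp v w) ≤ pseudoHyp z w ∧
      pseudoHyp z w ≤ (pseudoHyp z v + pseudoHyp v w) / (1 + pseudoHyp z v * pseudoHyp v w) := by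
  have hzv : ‖mobius v z‖ < 1 := pseudoHyp_lt_one hz hv
  have hwv : ‖mobius v w‖ < 1 := pseudoHyp_lt_one hw hv
  have := pseudoHyp_bounds_of_norm hzv hwv
  rwa [norm_mobius, norm_mobius, pseudoHyp_comm w v, pseudoHyp_mobius hv hz hw] at this

lemma exists_pseudoHyp_ofReal_eq {a b c : ℝ} (ha : 0 ≤ a) (ha1 : a < 1) (hb : 0 ≤ b)
    (hb1 : b < 1)
    (hc : |a - b| / (1 - a * b) ≤ c ∧ c ≤ (a + b) / (1 + a * b)) :
    ∃ w : ℂ, ‖w‖ = b ∧ pseudoHyp a w = c := by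
  let γ : ℝ → ℂ := fun θ => b * exp (θ * I)
  have hγ : ∀ θ, ‖γ θ‖ = b := fun θ => by
    simp [γ, norm_exp_ofReal_mul_I, abs_of_nonneg hb]
  have ha' : ‖(a : ℂ)‖ < 1 := by simpa [abs_of_nonneg ha] using ha1
  have hcont : Continuous fun θ => pseudoHyp a (γ θ) := by
    refine (Continuous.div (by fun_prop) (by fun_prop) fun θ => ?_).norm
    exact one_sub_conj_mul_ne_zero ha' (by rw [hγ]; exact hb1)
  have h0 : pseudoHyp a (γ 0) = |a - b| / (1 - a * b) := by
    simpa [γ] using pseudoHyp_ofReal (x := a) (y := b) (by nlinarith)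
  have hπ : pseudoHyp a (γ Real.pi) = (a + b) / (1 + a * b) := by
    have := pseudoHyp_ofReal (x := a) (y := -b) (by nlinarith)
    simp only [γ, exp_pi_mul_I]
    push_cast at this
    rw [mul_neg_one, this, sub_neg_eq_add, abs_of_nonneg (by linarith)]
    ring_nf
  obtain ⟨θ, -, hθ⟩ := intermediate_value_Icc Real.pi_pos.le hcont.continuousOn
    (by rw [h0, hπ]; exact hc)
  exact ⟨γ θ, hγ θ, hθ⟩

lemma fin_three_symm_ext {β : Type*} {d e : Fin 3 → Fin 3 → β} (hdiag : ∀ i, d i i = e i i)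
    (hd : ∀ i j, d i j = d j i) (he : ∀ i j, e i j = e j i)
    (h01 : d 0 1 = e 0 1) (h12 : d 1 2 = e 1 2) (h02 : d 0 2 = e 0 2) : ∀ i j, d i j = e i j := by
  intro i j
  fin_cases i <;> fin_cases j <;> simp_all [hd 1 0, hd 2 0, hd 2 1, he 1 0, he 2 0, he 2 1]

theorem three_point_embeds_iff_sti_general (δ : Fin 3 → Fin 3 → ℝ)
    (hzero : ∀ i, δ i i = 0)
    (hsymm : ∀ i j, δ i j = δ j i)
    (hpos : ∀ i j, i ≠ j → 0 < δ i j ∧ δ i j < 1) :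
    (∃ Φ : Fin 3 → ℂ, (∀ i, ‖Φ i‖ < 1) ∧ ∀ i j, pseudoHyp (Φ i) (Φ j) = δ i j) ↔
      (∀ i j k : Fin 3, i ≠ j → j ≠ k → i ≠ k →
        |δ i j - δ j k| / (1 - δ i j * δ j k) ≤ δ i k ∧
          δ i k ≤ (δ i j + δ j k) / (1 + δ i j * δ j k)) := by
  constructor
  · rintro ⟨Φ, hΦ, hΦδ⟩ i j k - - -
    rw [← hΦδ i j, ← hΦδ j k, ← hΦδ i k]
    exact pseudoHyp_sti (hΦ i) (hΦ j) (hΦ k)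
  · intro hsti
    obtain ⟨ha, ha1⟩ := hpos 0 1 (by decide)
    obtain ⟨hb, hb1⟩ := hpos 1 2 (by decide)
    obtain ⟨w, hw, haw⟩ := exists_pseudoHyp_ofReal_eq ha.le ha1 hb.le hb1
      (hsti 0 1 2 (by decide) (by decide) (by decide))
    refine ⟨![(δ 0 1 : ℂ), 0, w], ?_, ?_⟩
    · intro i
      fin_cases i <;> simp [abs_of_pos ha, ha1, hw, hb1]
    · refine fin_three_symm_ext (fun i => by simp [pseudoHyp_self, hzero])
        (fun i j => pseudoHyp_comm _ _) hsymm ?_ ?_ haw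
      · simp [pseudoHyp_zero_right, abs_of_pos ha]
      · simp [pseudoHyp_comm 0, pseudoHyp_zero_right, hw]

/-- A three-point metric space with distances in `(0,1)` embeds isometrically into the
open unit disk with the pseudohyperbolic metric iff its distances satisfy the
strengthened triangle inequality for all permutations of the points. -/
theorem three_point_embeds_iff_sti (δ : Fin 3 → Fin 3 → ℝ)
    (hzero : ∀ i, δ i i = 0)
    (hsymm : ∀ i j, δ i j = δ j i)
    (hpos : ∀ i j, i ≠ j → 0 < δ i j ∧ δ i j < 1)
    (htri : ∀ i j k, δ i k ≤ δ i j + δ j k) :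
    (∃ Φ : Fin 3 → ℂ, (∀ i, ‖Φ i‖ < 1) ∧ ∀ i j, pseudoHyp (Φ i) (Φ j) = δ i j) ↔
      (∀ i j k : Fin 3, i ≠ j → j ≠ k → i ≠ k →
        |δ i j - δ j k| / (1 - δ i j * δ j k) ≤ δ i k ∧
          δ i k ≤ (δ i j + δ j k) / (1 + δ i j * δ j k)) :=
  three_point_embeds_iff_sti_general δ hzero hsymm hpos
end

section
/- Let K be the 3×3 matrix with k_12=k_21=k_22=k_23=k_32=1, k_11=k_33=(1-r²)^{-2}, and k_13=k_31=(1+r²)^{-2}, for 0<r<1. Then K is positive definite, and for all sufficiently small r>0, the quantities δ_ij = sqrt(1 - |k_ij|²/(k_ii k_jj)) violate the strengthened triangle inequality: δ_13 > (δ_12+δ_23)/(1+δ_12 δ_23). -/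
/-- The Gram matrix of the Bergman kernels `k_z(w) = (1-z̄w)⁻²` at the points `{-r,0,r}`. -/
noncomputable def bergGram (r : ℝ) : Matrix (Fin 3) (Fin 3) ℝ :=
  !![((1 - r ^ 2) ^ 2)⁻¹, 1, ((1 + r ^ 2) ^ 2)⁻¹;
     1, 1, 1;
     ((1 + r ^ 2) ^ 2)⁻¹, 1, ((1 - r ^ 2) ^ 2)⁻¹]

/-- The induced metric `δ_ij = √(1 - k_ij²/(k_ii k_jj))` of the Gram matrix `bergGram r`. -/
noncomputable def bergDelta (r : ℝ) (i j : Fin 3) : ℝ :=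
  Real.sqrt (1 - (bergGram r i j) ^ 2 / (bergGram r i i * bergGram r j j))

/-!
With `p = (1 - r²)²` and `q = (1 + r²)²` one has `1 - δ₁₂² = 1 - δ₂₃² = p` and
`1 - δ₁₃² = (p / q)²`. Since `(2x / (1 + x²))² = 1 - ((1 - x²) / (1 + x²))²`, the strengthened
triangle inequality with `δ₁₂ = δ₂₃ = x` amounts to `(p / (2 - p))² ≤ (p / q)²`, i.e. `q ≤ 2 - p`;
but `p + q = 2 + 2r⁴ > 2`, so it fails for every `0 < r < 1`.
-/

open Matrix

lemma posDef_of_two_lt_add_of_lt {a b : ℝ} (hab : 2 < a + b) (hba : b < a) :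
    (!![a, 1, b; 1, 1, 1; b, 1, a] : Matrix (Fin 3) (Fin 3) ℝ).PosDef := by
  refine .of_dotProduct_mulVec_pos ?_ fun x hx ↦ ?_
  · ext i j
    fin_cases i <;> fin_cases j <;> simp
  · have hQ : star x ⬝ᵥ (!![a, 1, b; 1, 1, 1; b, 1, a] *ᵥ x) =
        (x 0 + x 1 + x 2) ^ 2 + (a + b - 2) / 2 * (x 0 + x 2) ^ 2
          + (a - b) / 2 * (x 0 - x 2) ^ 2 := by
      simp only [dotProduct, Pi.star_apply, star_trivial, mulVec, of_apply, cons_val',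
        cons_val_fin_one, Fin.sum_univ_three, cons_val_zero, cons_val_one, cons_val, one_mul]
      ring
    have hx' : x 0 + x 1 + x 2 ≠ 0 ∨ x 0 + x 2 ≠ 0 ∨ x 0 - x 2 ≠ 0 := by
      by_contra! h
      exact hx (by ext i; fin_cases i <;> simp <;> linarith [h.1, h.2.1, h.2.2])
    rw [hQ]
    have hc : 0 < (a + b - 2) / 2 := by linarith
    have hd : 0 < (a - b) / 2 := by linarith
    rcases hx' with h | h | h
    · have := sq_pos_of_ne_zero h; positivity
    · have := mul_pos hc (sq_pos_of_ne_zero h); positivity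
    · have := mul_pos hd (sq_pos_of_ne_zero h); positivity

lemma add_div_one_add_mul_lt_sqrt {p q : ℝ} (hp₀ : 0 < p) (hp₁ : p ≤ 1) (hpq : 2 < p + q) :
    (√(1 - p) + √(1 - p)) / (1 + √(1 - p) * √(1 - p)) < √(1 - (p / q) ^ 2) := by
  have hx : √(1 - p) * √(1 - p) = 1 - p := Real.mul_self_sqrt (by linarith)
  have h2p : 0 < 2 - p := by linarith
  rw [hx, show 1 + (1 - p) = 2 - p by ring, Real.lt_sqrt (by positivity)]
  have hlhs : ((√(1 - p) + √(1 - p)) / (2 - p)) ^ 2 = 1 - (p / (2 - p)) ^ 2 := by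
    rw [← two_mul, div_pow, mul_pow, Real.sq_sqrt (by linarith)]
    field_simp
    ring
  rw [hlhs, sub_lt_sub_iff_left, div_pow, div_pow]
  gcongr
  linarith

lemma bergDelta_zero_one (r : ℝ) : bergDelta r 0 1 = √(1 - (1 - r ^ 2) ^ 2) := by
  simp [bergDelta, bergGram]

lemma bergDelta_one_two (r : ℝ) : bergDelta r 1 2 = √(1 - (1 - r ^ 2) ^ 2) := by
  simp [bergDelta, bergGram]

lemma bergDelta_zero_two (r : ℝ) :
    bergDelta r 0 2 = √(1 - ((1 - r ^ 2) ^ 2 / (1 + r ^ 2) ^ 2) ^ 2) := by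
  simp only [bergDelta, bergGram, of_apply, cons_val', cons_val, cons_val_fin_one, cons_val_zero,
    cons_val_one, inv_pow]
  congr 2
  field_simp

lemma two_lt_sq_one_sub_add_sq_one_add {s : ℝ} (hs : s ≠ 0) : 2 < (1 - s) ^ 2 + (1 + s) ^ 2 := by
  nlinarith [sq_pos_of_ne_zero hs]

lemma bergGram_posDef {r : ℝ} (h₀ : 0 < r) (h₁ : r < 1) : (bergGram r).PosDef := by
  have hr : 0 < 1 - r ^ 2 := by nlinarith
  have huv : (1 - r ^ 2) ^ 2 * (1 + r ^ 2) ^ 2 ≤ 1 := by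
    rw [← mul_pow]
    exact pow_le_one₀ (by positivity) (by nlinarith [pow_pos h₀ 4])
  apply posDef_of_two_lt_add_of_lt
  · calc 2 < ((1 - r ^ 2) ^ 2 + (1 + r ^ 2) ^ 2) / ((1 - r ^ 2) ^ 2 * (1 + r ^ 2) ^ 2) := by
          rw [lt_div_iff₀ (by positivity)]
          nlinarith [two_lt_sq_one_sub_add_sq_one_add (pow_pos h₀ 2).ne']
      _ = ((1 - r ^ 2) ^ 2)⁻¹ + ((1 + r ^ 2) ^ 2)⁻¹ := by field_simp; ring
  · exact inv_strictAnti₀ (by positivity) (by gcongr; linarith [pow_pos h₀ 2])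

lemma bergDelta_fails_sti {r : ℝ} (h₀ : 0 < r) (h₁ : r < 1) :
    (bergDelta r 0 1 + bergDelta r 1 2) / (1 + bergDelta r 0 1 * bergDelta r 1 2) <
      bergDelta r 0 2 := by
  have hr : 0 < 1 - r ^ 2 := by nlinarith
  rw [bergDelta_zero_one, bergDelta_one_two, bergDelta_zero_two]
  exact add_div_one_add_mul_lt_sqrt (by positivity) (pow_le_one₀ hr.le (by nlinarith))
    (two_lt_sq_one_sub_add_sq_one_add (pow_pos h₀ 2).ne')

/-- The Bergman Gram matrix at `{-r,0,r}` is positive definite, yet for all small `r > 0`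
the induced distances violate the strengthened triangle inequality:
`δ₁₃ > (δ₁₂+δ₂₃)/(1+δ₁₂δ₂₃)`. -/
theorem bergman_fails_sti :
    (∀ r : ℝ, 0 < r → r < 1 → (bergGram r).PosDef) ∧
      ∃ r₀ : ℝ, 0 < r₀ ∧ ∀ r : ℝ, 0 < r → r < r₀ →
        (bergDelta r 0 1 + bergDelta r 1 2) / (1 + bergDelta r 0 1 * bergDelta r 1 2) <
          bergDelta r 0 2 :=
  ⟨fun _ h₀ h₁ ↦ bergGram_posDef h₀ h₁, 1, one_pos, fun _ h₀ h₁ ↦ bergDelta_fails_sti h₀ h₁⟩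
end

section
/- For three distinct points z₁, z₂, z₃ in the open unit disk, the Hardy-kernel Gram entries k_ij = (1 - z̄_i z_j)^{-1} satisfy cos(arg(k_12 k_23 k_31)) > 0, i.e. the angular invariant A_123 = arg(k_12 k_23 k_31) satisfies |A_123| < π/2. -/
/-! The triple product of kernel entries is the inverse of
`P = (1 - āb)(1 - b̄c)(1 - c̄a)` with `(a, b, c) = (z₁, z₂, z₃)`, and inversion preserves the
sign of the real part. Expanding `P` and using `2 Re(āb) = |a|² + |b|² - |a - b|²` writes `Re P`
as `(1-|a|²)(1-|b|²)(1-|c|²)` plus a combination of `|a-b|², |b-c|², |c-a|²` with positive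
weights, so `Re P > 0` on the disk and hence `|arg P⁻¹| < π/2`. -/

open ComplexConjugate

namespace Complex

theorem re_one_sub_conj_mul_cyclic (a b c : ℂ) :
    ((1 - conj a * b) * (1 - conj b * c) * (1 - conj c * a)).re =
      (1 - ‖a‖ ^ 2) * (1 - ‖b‖ ^ 2) * (1 - ‖c‖ ^ 2) +
        ((1 - ‖c‖ ^ 2) * ‖a - b‖ ^ 2 + (1 - ‖a‖ ^ 2) * ‖b - c‖ ^ 2 +
          (1 - ‖b‖ ^ 2) * ‖c - a‖ ^ 2) / 2 := by
  simp only [Complex.sq_norm, normSq_apply, mul_re, mul_im, sub_re, sub_im, one_re, one_im,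
    conj_re, conj_im]
  ring

theorem re_one_sub_conj_mul_cyclic_pos {a b c : ℂ} (ha : ‖a‖ < 1) (hb : ‖b‖ < 1)
    (hc : ‖c‖ < 1) : 0 < ((1 - conj a * b) * (1 - conj b * c) * (1 - conj c * a)).re := by
  have one_sub_sq_pos {w : ℂ} (hw : ‖w‖ < 1) : 0 < 1 - ‖w‖ ^ 2 := by
    nlinarith [norm_nonneg w]
  rw [re_one_sub_conj_mul_cyclic]
  have := one_sub_sq_pos ha
  have := one_sub_sq_pos hb
  have := one_sub_sq_pos hc
  positivity

theorem abs_arg_inv_lt_pi_div_two {w : ℂ} (hw : 0 < w.re) : |arg w⁻¹| < Real.pi / 2 := by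
  have hw₀ : w ≠ 0 := fun h => by simp [h] at hw
  rw [abs_arg_lt_pi_div_two_iff, inv_re]
  exact Or.inl (div_pos hw (normSq_pos.mpr hw₀))

end Complex

theorem hardy_angular_invariant_lt_pi_div_two_general (z : Fin 3 → ℂ)
    (hz : ∀ i, ‖z i‖ < 1) :
    0 < Real.cos (Complex.arg
        ((1 - (starRingEnd ℂ) (z 0) * z 1)⁻¹ * (1 - (starRingEnd ℂ) (z 1) * z 2)⁻¹ *
          (1 - (starRingEnd ℂ) (z 2) * z 0)⁻¹)) ∧
      |Complex.arg
        ((1 - (starRingEnd ℂ) (z 0) * z 1)⁻¹ * (1 - (starRingEnd ℂ) (z 1) * z 2)⁻¹ *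
          (1 - (starRingEnd ℂ) (z 2) * z 0)⁻¹)| < Real.pi / 2 := by
  simp only [← mul_inv]
  have harg := Complex.abs_arg_inv_lt_pi_div_two
    (Complex.re_one_sub_conj_mul_cyclic_pos (hz 0) (hz 1) (hz 2))
  exact ⟨Real.cos_pos_of_mem_Ioo (abs_lt.mp harg), harg⟩

/-- For three distinct points of the open unit disk, the angular invariant
`A₁₂₃ = arg(k₁₂k₂₃k₃₁)` of the Hardy-kernel Gram entries `k_ij = (1-z̄_i z_j)⁻¹`
satisfies `cos A₁₂₃ > 0`, i.e. `|A₁₂₃| < π/2`. -/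
theorem hardy_angular_invariant_lt_pi_div_two (z : Fin 3 → ℂ)
    (hz : ∀ i, ‖z i‖ < 1) (hinj : Function.Injective z) :
    0 < Real.cos (Complex.arg
        ((1 - (starRingEnd ℂ) (z 0) * z 1)⁻¹ * (1 - (starRingEnd ℂ) (z 1) * z 2)⁻¹ *
          (1 - (starRingEnd ℂ) (z 2) * z 0)⁻¹)) ∧
      |Complex.arg
        ((1 - (starRingEnd ℂ) (z 0) * z 1)⁻¹ * (1 - (starRingEnd ℂ) (z 1) * z 2)⁻¹ *
          (1 - (starRingEnd ℂ) (z 2) * z 0)⁻¹)| < Real.pi / 2 :=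
  hardy_angular_invariant_lt_pi_div_two_general z hz
end

section
/- Let ω be a primitive cube root of unity, 0<r<1, λ>0, and y_j = rω^j for j=1,2,3. With k_ij = (1 - y_i conj(y_j))^{-λ}, the angular invariant satisfies arg(k_12 k_23 k_31) = 3λ·arg(1 - r²ω) (taken modulo 2π). Consequently there exist r ∈ (0,1) and λ > 0 such that cos(arg(k_12 k_23 k_31)) < 0. -/
open Complex

/-- A primitive cube root of unity. -/
noncomputable def cubeRoot : ℂ := Complex.exp (2 * Real.pi * Complex.I / 3)

/-- The kernel entries `k_ij = (1 - y_i conj(y_j))^{-λ}` for `y_j = r·ω^j`. -/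
noncomputable def rotKernel (r lam : ℝ) (i j : ℕ) : ℂ :=
  (1 - ((r : ℂ) * cubeRoot ^ i) * (starRingEnd ℂ) ((r : ℂ) * cubeRoot ^ j)) ^ (-(lam : ℂ))

/-!
All three kernels are equal: `y_i conj(y_{i+1}) = r² conj ω`, so `k₁₂ = k₂₃ = k₃₁ = (conj u)^{-λ}`
with `u = 1 - r²ω`. Modulo `2π` the argument of `(conj u)^{-λ}` is `-λ arg (conj u) = λ arg u`,
so that of the product is `3λ arg u`. Since `arg u ∈ (-π, 0)` for `r ≠ 0`, taking
`λ = π / (-3 arg u)` makes the angular invariant equal to `-π`.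
-/

theorem Complex.arg_exp_coe_angle (z : ℂ) : (arg (exp z) : Real.Angle) = z.im := by
  rw [arg_exp, Real.Angle.coe_toIocMod]

theorem Complex.arg_cpow_ofReal_pow_coe_angle {z : ℂ} (hz : z ≠ 0) (s : ℝ) (k : ℕ) :
    (arg ((z ^ (s : ℂ)) ^ k) : Real.Angle) = ((k * s * arg z : ℝ) : Real.Angle) := by
  rw [cpow_def_of_ne_zero hz, ← exp_nat_mul, arg_exp_coe_angle]
  congr 1
  simp only [mul_im, natCast_re, natCast_im, mul_re, ofReal_re, ofReal_im, log_im, log_re]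
  ring

theorem isPrimitiveRoot_cubeRoot : IsPrimitiveRoot cubeRoot 3 := by
  simpa [cubeRoot] using isPrimitiveRoot_exp 3 (by norm_num)

theorem conj_cubeRoot : (starRingEnd ℂ) cubeRoot = cubeRoot ^ 2 := by
  have h := isPrimitiveRoot_cubeRoot
  rw [← inv_eq_conj (h.norm'_eq_one (by norm_num)), inv_eq_of_mul_eq_one_right]
  rw [← pow_succ', h.pow_eq_one]

theorem cubeRoot_im_pos : 0 < cubeRoot.im := by
  rw [cubeRoot, show 2 * (Real.pi : ℂ) * I / 3 = ((2 * Real.pi / 3 : ℝ) : ℂ) * I by push_cast; ring,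
    exp_ofReal_mul_I_im]
  exact Real.sin_pos_of_pos_of_lt_pi (by positivity) (by linarith [Real.pi_pos])

theorem cubeRoot_pow_mul_conj_pow {i j : ℕ} (h : i + 1 ≡ j [MOD 3]) :
    cubeRoot ^ i * (starRingEnd ℂ) (cubeRoot ^ j) = (starRingEnd ℂ) cubeRoot := by
  have h' : (i + 2 * j) % 3 = 2 := by unfold Nat.ModEq at h; omega
  rw [map_pow, conj_cubeRoot, ← pow_mul, ← pow_add, ← pow_mod_orderOf,
    ← isPrimitiveRoot_cubeRoot.eq_orderOf, h']

theorem rotKernel_eq_of_modEq (r lam : ℝ) {i j : ℕ} (h : i + 1 ≡ j [MOD 3]) :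
    rotKernel r lam i j = (starRingEnd ℂ) (1 - (r : ℂ) ^ 2 * cubeRoot) ^ (-(lam : ℂ)) := by
  have h' := cubeRoot_pow_mul_conj_pow h
  rw [rotKernel]
  congr 1
  simp only [map_sub, map_one, map_mul, map_pow, conj_ofReal] at h' ⊢
  linear_combination (-(r : ℂ) ^ 2) * h'

theorem arg_one_sub_sq_mul_cubeRoot_neg {r : ℝ} (hr : r ≠ 0) :
    arg (1 - (r : ℂ) ^ 2 * cubeRoot) < 0 := by
  have him : (1 - (r : ℂ) ^ 2 * cubeRoot).im = -(r ^ 2 * cubeRoot.im) := by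
    simp [← ofReal_pow]
  rw [arg_neg_iff, him, neg_neg_iff_pos]
  exact mul_pos (by positivity) cubeRoot_im_pos

theorem arg_rotKernel_triple_coe_angle {r : ℝ} (hr : r ≠ 0) (lam : ℝ) :
    (arg (rotKernel r lam 1 2 * rotKernel r lam 2 3 * rotKernel r lam 3 1) : Real.Angle) =
      ((3 * lam * arg (1 - (r : ℂ) ^ 2 * cubeRoot) : ℝ) : Real.Angle) := by
  set u := 1 - (r : ℂ) ^ 2 * cubeRoot
  have harg := arg_one_sub_sq_mul_cubeRoot_neg hr
  have hu : u ≠ 0 := fun h => by simp [u, h] at harg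
  rw [rotKernel_eq_of_modEq r lam (i := 1) (j := 2) rfl,
    rotKernel_eq_of_modEq r lam (i := 2) (j := 3) rfl,
    rotKernel_eq_of_modEq r lam (i := 3) (j := 1) rfl, ← pow_three', ← ofReal_neg,
    arg_cpow_ofReal_pow_coe_angle ((map_ne_zero _).2 hu),
    arg_conj, if_neg (harg.trans Real.pi_pos).ne]
  congr 1
  push_cast
  ring

/-- For `y_j = rω^j` and `k_ij = (1-y_i ȳ_j)^{-λ}`, the angular invariant satisfies
`arg(k₁₂k₂₃k₃₁) = 3λ·arg(1-r²ω)` modulo `2π`; consequently there exist `r ∈ (0,1)` and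
`λ > 0` with `cos(arg(k₁₂k₂₃k₃₁)) < 0`. -/
theorem rotKernel_angular_invariant :
    (∀ r lam : ℝ, 0 < r → r < 1 → 0 < lam →
      ∃ m : ℤ, Complex.arg (rotKernel r lam 1 2 * rotKernel r lam 2 3 * rotKernel r lam 3 1) =
        3 * lam * Complex.arg (1 - (r : ℂ) ^ 2 * cubeRoot) + 2 * Real.pi * m) ∧
      ∃ r lam : ℝ, 0 < r ∧ r < 1 ∧ 0 < lam ∧
        Real.cos (Complex.arg
          (rotKernel r lam 1 2 * rotKernel r lam 2 3 * rotKernel r lam 3 1)) < 0 := by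
  refine ⟨fun r lam hr _ _ => ?_, ?_⟩
  · obtain ⟨m, hm⟩ := Real.Angle.angle_eq_iff_two_pi_dvd_sub.1
      (arg_rotKernel_triple_coe_angle hr.ne' lam)
    exact ⟨m, by linarith⟩
  · set a := arg (1 - ((1 / 2 : ℝ) : ℂ) ^ 2 * cubeRoot)
    have ha : a < 0 := arg_one_sub_sq_mul_cubeRoot_neg (by norm_num)
    refine ⟨1 / 2, Real.pi / (-3 * a), by norm_num, by norm_num,
      div_pos Real.pi_pos (by linarith), ?_⟩
    rw [← Real.Angle.cos_coe, arg_rotKernel_triple_coe_angle (by norm_num),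
      show 3 * (Real.pi / (-3 * a)) * a = -Real.pi by field_simp [ha.ne], Real.Angle.coe_neg,
      Real.Angle.neg_coe_pi, Real.Angle.cos_coe_pi]
    norm_num
end

section
/- Let H be a finite-dimensional Hilbert space with basis {k_i}, Gram matrix K, dual basis {f_i}, and Ω(Σ α_i k_i) = Σ conj(α_i) f_i. Then Ω is an involution (Ω∘Ω = id) if and only if conj(Θ)·Θ = I where Θ = K^{-1}; equivalently, since Θ = K^{-1} is self-adjoint, Ω is an involution iff K is orthogonal. -/
/-!
Expanding `f j` in the basis, duality reads `K * conj P = 1` for the coordinate matrix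
`P = b.toMatrix f`, so `P = conj K⁻¹`. In coordinates `Ω` is `v ↦ P *ᵥ conj v`, hence `Ω ∘ Ω` is
`v ↦ (P * conj P) *ᵥ v = (conj K⁻¹ * K⁻¹) *ᵥ v`. Finally `conj K⁻¹ * K⁻¹ = (K * conj K)⁻¹`, and a
one-sided inverse of a square matrix is two-sided.
-/

open Finset Matrix

open scoped InnerProductSpace ComplexConjugate

namespace Matrix

variable {m n R : Type*} [Fintype n] [CommRing R]

theorem star_mulVec_eq_map_mulVec [StarRing R] (M : Matrix m n R) (v : n → R) :
    star (M *ᵥ v) = M.map conj *ᵥ star v := by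
  ext i
  exact (starRingEnd R).map_mulVec M v i

theorem map_inv_mul_inv_eq_one_iff [DecidableEq n] {A : Matrix n n R} (hA : IsUnit A)
    (σ : R →+* R) : A⁻¹.map σ * A⁻¹ = 1 ↔ A.map σ * A = 1 := by
  obtain ⟨u, rfl⟩ := hA
  set τ := Units.map (σ.mapMatrix (m := n)).toMonoidHom
  have h : τ u⁻¹ * u⁻¹ = 1 ↔ τ u * u = 1 := by
    rw [map_inv, ← _root_.mul_inv_rev, inv_eq_one, mul_eq_one_comm]
  simpa [τ, Units.ext_iff, ← coe_units_inv] using h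

end Matrix

namespace Module.Basis

variable {ι R E : Type*} [Fintype ι] [CommRing R] [AddCommGroup E] [Module R E]
  (b : Basis ι R E) (f : ι → E)

theorem equivFun_sum_smul (w : ι → R) : b.equivFun (∑ i, w i • f i) = b.toMatrix f *ᵥ w := by
  ext j
  simp [mulVec, dotProduct, toMatrix_apply, mul_comm]

theorem equivFun_apply_apply_of_eq_sum_conj_smul [StarRing R] {Ω : E → E}
    (hΩ : ∀ x, Ω x = ∑ i, conj (b.repr x i) • f i) (x : E) :
    b.equivFun (Ω (Ω x)) = (b.toMatrix f * (b.toMatrix f).map conj) *ᵥ b.equivFun x := by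
  have hcoord : ∀ y, b.equivFun (Ω y) = b.toMatrix f *ᵥ star (b.equivFun y) := fun y => by
    rw [hΩ, ← equivFun_sum_smul]; rfl
  rw [hcoord, hcoord, star_mulVec_eq_map_mulVec, star_star, mulVec_mulVec]

theorem involutive_iff_mul_map_conj_eq_one [DecidableEq ι] [StarRing R] {Ω : E → E}
    (hΩ : ∀ x, Ω x = ∑ i, conj (b.repr x i) • f i) :
    Function.Involutive Ω ↔ b.toMatrix f * (b.toMatrix f).map conj = 1 := by
  rw [ext_iff_mulVec]
  refine ⟨fun h v => ?_, fun h x => b.equivFun.injective ?_⟩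
  · obtain ⟨x, rfl⟩ := b.equivFun.surjective v
    rw [one_mulVec, ← b.equivFun_apply_apply_of_eq_sum_conj_smul f hΩ, h x]
  · rw [b.equivFun_apply_apply_of_eq_sum_conj_smul f hΩ, h, one_mulVec]

theorem gram_transpose_mul_toMatrix_map_conj {𝕜 ι E : Type*} [RCLike 𝕜] [Fintype ι]
    [DecidableEq ι] [SeminormedAddCommGroup E] [InnerProductSpace 𝕜 E] (b : Basis ι 𝕜 E)
    {f : ι → E} (hdual : ∀ i j, ⟪f j, b i⟫_𝕜 = if i = j then 1 else 0) :
    (gram 𝕜 b)ᵀ * (b.toMatrix f).map conj = 1 := by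
  ext i j
  rw [one_apply, ← hdual, ← b.sum_repr (f j), sum_inner, mul_apply]
  simp [inner_smul_left, toMatrix_apply, mul_comm]

end Module.Basis

/-- Let `{k_i}` be a basis of a finite-dimensional complex Hilbert space with Gram matrix
`K`, dual basis `{f_i}`, and let `Ω` be the conjugate-linear map with
`Ω(Σ α_i k_i) = Σ conj(α_i) f_i`.  Then `Ω` is an involution (`Ω∘Ω = id`) iff
`conj(Θ)·Θ = I` where `Θ = K⁻¹`; equivalently, iff `K` is orthogonal:
`conj(K)·K = I`. -/
theorem conjugation_involution_iff_orthogonal {n : ℕ} {H : Type*} [NormedAddCommGroup H]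
    [InnerProductSpace ℂ H] (b : Module.Basis (Fin n) ℂ H) (f : Fin n → H)
    (hdual : ∀ i j, (inner ℂ (f j) (b i) : ℂ) = if i = j then 1 else 0)
    (K : Matrix (Fin n) (Fin n) ℂ)
    (hK : ∀ i j, K i j = (inner ℂ (b j) (b i) : ℂ))
    (Ω : H → H)
    (hΩ : ∀ h : H, Ω h = ∑ i, (starRingEnd ℂ) (b.repr h i) • f i) :
    ((∀ h : H, Ω (Ω h) = h) ↔ (K⁻¹).map (starRingEnd ℂ) * K⁻¹ = 1) ∧
      ((∀ h : H, Ω (Ω h) = h) ↔ K.map (starRingEnd ℂ) * K = 1) := by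
  have hKP : K * (b.toMatrix f).map conj = 1 := by
    convert b.gram_transpose_mul_toMatrix_map_conj hdual
    ext i j
    exact hK i j
  have hconj : ∀ M : Matrix (Fin n) (Fin n) ℂ, (M.map conj).map conj = M := fun M => by
    ext
    simp
  have hP : b.toMatrix f = K⁻¹.map conj := by
    rw [inv_eq_right_inv hKP, hconj]
  have hinv : (∀ h, Ω (Ω h) = h) ↔ K⁻¹.map conj * K⁻¹ = 1 := by
    simpa only [Function.Involutive, hP, hconj] using b.involutive_iff_mul_map_conj_eq_one f hΩ
  exact ⟨hinv, hinv.trans (map_inv_mul_inv_eq_one_iff (.of_mul_eq_one _ hKP) _)⟩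
end

section
/- Let T be a finite rooted tree with root o and let Ω: T → ℝ satisfy Ω(o)=1 and Ω strictly increasing along paths from the root (Ω(y) < Ω(x) whenever y < x). Define k(x,y) = Ω(x∧y), where x∧y is the meet (deepest common ancestor). Then for any function f: T → ℂ not identically zero, Σ_{x,y∈T} k(x,y) f(x) conj(f(y)) > 0; that is, the matrix (Ω(x∧y))_{x,y∈T} is positive definite. -/
/-!
Write `Ω x = ∑_{z ≤ x} c z`, where `c` is the increment of `Ω` along the edge from the parent
of `z` to `z` (and `c o = Ω o`), so `c > 0`. Then `Ω (x ⊓ y) = ∑_{z ≤ x, z ≤ y} c z`, and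
summation by parts turns the quadratic form into `∑_z c z |∑_{x ≥ z} f x|²`. At a maximal
point `m` of the support of `f` the inner sum is just `f m ≠ 0`, so the form is positive.
-/

open Finset Complex ComplexConjugate

section TreeOrder

variable {V : Type*} [PartialOrder V]

theorem exists_greatest_lt_of_isChain_Iic [Finite V]
    (hchain : ∀ x : V, IsChain (· ≤ ·) (Set.Iic x)) {z : V} (hz : ¬IsMin z) :
    ∃ p, p < z ∧ ∀ y < z, y ≤ p := by
  obtain ⟨p, hp⟩ := (Set.toFinite (Set.Iio z)).exists_maximal (not_isMin_iff.mp hz)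
  refine ⟨p, hp.prop, fun y hy => ?_⟩
  rcases (hchain z).total hy.le hp.prop.le with h | h
  · exact h
  · exact hp.2 hy h

variable [Fintype V] [DecidableLE V]

theorem exists_pos_sum_le_eq (hchain : ∀ x : V, IsChain (· ≤ ·) (Set.Iic x))
    (Ω : V → ℝ) (hmin : ∀ x, IsMin x → 0 < Ω x) (hmono : StrictMono Ω) :
    ∃ c : V → ℝ, (∀ z, 0 < c z) ∧ ∀ x, ∑ z with z ≤ x, c z = Ω x := by
  classical
  choose! parent hlt hgreatest using
    fun z (hz : ¬IsMin z) => exists_greatest_lt_of_isChain_Iic hchain hz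
  refine ⟨fun z => if IsMin z then Ω z else Ω z - Ω (parent z), fun z => ?_, fun x => ?_⟩
  · dsimp only
    split_ifs with hz
    · exact hmin z hz
    · exact sub_pos.2 (hmono (hlt z hz))
  induction x using WellFoundedLT.induction with
  | ind x ih =>
    by_cases hx : IsMin x
    · have hIic : filter (· ≤ x) univ = {x} := by
        ext z
        simpa using ⟨fun h => hx.eq_of_le h, fun h => h.le⟩
      simp [hIic, hx]
    · have hIic : filter (· ≤ x) univ = insert x (filter (· ≤ parent x) univ) := by
        ext z
        simp only [mem_filter, mem_univ, true_and, mem_insert, le_iff_eq_or_lt (b := x)]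
        exact or_congr_right ⟨hgreatest x hx z, fun h => h.trans_lt (hlt x hx)⟩
      rw [hIic, sum_insert (by simpa using (hlt x hx).not_ge), ih _ (hlt x hx)]
      simp [hx]

/-- The paper's `I*f`. -/
def sumAbove (f : V → ℂ) (z : V) : ℂ := ∑ x with z ≤ x, f x

theorem sumAbove_eq_self_of_forall_lt {f : V → ℂ} {m : V}
    (hm : ∀ x, m < x → f x = 0) : sumAbove f m = f m :=
  sum_eq_single_of_mem m (by simp)
    fun x hx hne => hm x (lt_of_le_of_ne (mem_filter.1 hx).2 (Ne.symm hne))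

theorem sum_mul_normSq_sumAbove_pos {c : V → ℝ} (hc : ∀ z, 0 < c z)
    {f : V → ℂ} (hf : f ≠ 0) : 0 < ∑ z, c z * normSq (sumAbove f z) := by
  obtain ⟨m, hm⟩ := (Set.toFinite (Function.support f)).exists_maximal
    (Function.support_nonempty_iff.2 hf)
  have hfm : sumAbove f m = f m :=
    sumAbove_eq_self_of_forall_lt fun x hx => by_contra fun h => hm.not_gt h hx
  refine sum_pos' (fun z _ => mul_nonneg (hc z).le (normSq_nonneg _)) ⟨m, mem_univ m, ?_⟩
  rw [hfm]
  exact mul_pos (hc m) (normSq_pos.2 hm.prop)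

end TreeOrder

theorem sum_inf_kernel_eq_sum_mul_normSq_sumAbove {V : Type*} [SemilatticeInf V] [Fintype V]
    [DecidableLE V] (c : V → ℝ) (f : V → ℂ) :
    ∑ x, ∑ y, ((∑ z with z ≤ x ⊓ y, c z : ℝ) : ℂ) * f x * conj (f y) =
      ((∑ z, c z * normSq (sumAbove f z) : ℝ) : ℂ) := by
  push_cast
  simp_rw [← mul_conj, sumAbove, sum_filter, map_sum, sum_mul_sum, mul_sum, sum_mul, le_inf_iff]
  conv_rhs => rw [sum_comm]
  refine sum_congr rfl fun x _ => ?_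
  rw [sum_comm]
  refine sum_congr rfl fun z _ => sum_congr rfl fun y _ => ?_
  by_cases hx : z ≤ x <;> by_cases hy : z ≤ y <;> simp [hx, hy, mul_assoc]

/-- Let `T` be a finite rooted tree (modeled as a finite meet-semilattice with bottom
element `⊥ = o` in which the set of ancestors of every vertex is a chain, so that `x ⊓ y`
is the deepest common ancestor), and let `Ω : T → ℝ` satisfy `Ω(o) = 1` and be strictly
increasing along paths from the root.  Then for every function `f : T → ℂ` not
identically zero, `Σ_{x,y} Ω(x∧y) f(x) conj(f(y)) > 0`; i.e. the matrix
`(Ω(x∧y))_{x,y}` is positive definite. -/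
theorem tree_kernel_posdef {V : Type*} [Fintype V] [SemilatticeInf V] [OrderBot V]
    (hchain : ∀ x : V, IsChain (· ≤ ·) {y : V | y ≤ x})
    (Ω : V → ℝ) (h1 : Ω ⊥ = 1) (hmono : ∀ x y : V, x < y → Ω x < Ω y)
    (f : V → ℂ) (hf : f ≠ 0) :
    (∑ x : V, ∑ y : V, (Ω (x ⊓ y) : ℂ) * f x * (starRingEnd ℂ) (f y)).im = 0 ∧
      0 < (∑ x : V, ∑ y : V, (Ω (x ⊓ y) : ℂ) * f x * (starRingEnd ℂ) (f y)).re := by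
  classical
  have hmin : ∀ x : V, IsMin x → 0 < Ω x := fun x hx => by rw [hx.eq_bot, h1]; exact one_pos
  obtain ⟨c, hc, hsum⟩ := exists_pos_sum_le_eq hchain Ω hmin fun x y => hmono x y
  have hgram : ∑ x : V, ∑ y : V, (Ω (x ⊓ y) : ℂ) * f x * conj (f y) =
      ((∑ z, c z * normSq (sumAbove f z) : ℝ) : ℂ) := by
    simp only [← hsum]
    exact sum_inf_kernel_eq_sum_mul_normSq_sumAbove c f
  rw [hgram, ofReal_im, ofReal_re]
  exact ⟨rfl, sum_mul_normSq_sumAbove_pos hc hf⟩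
end

section
/- Let T be a finite rooted tree with root o. For any functions h, f: T → ℂ, the summation-by-parts identity holds: Σ_{x,y∈T} h(x∧y) f(x) conj(f(y)) = h(o)|I*f(o)|² + Σ_{z∈T, z≠o} (h(z) - h(z⁻)) |I*f(z)|², where I*f(z) = Σ_{τ≥z} f(τ) and z⁻ is the parent of z. -/
open Finset

lemma tree_telescope {V : Type*} [Fintype V] [DecidableEq V]
    [SemilatticeInf V] [OrderBot V] [DecidableRel ((· ≤ ·) : V → V → Prop)]
    (par : V → V)
    (hpar1 : ∀ z : V, z ≠ ⊥ → par z < z)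
    (hpar2 : ∀ z y : V, y < z → y ≤ par z)
    (h : V → ℂ) (w : V) :
    h w = h ⊥ + ∑ z ∈ Finset.univ.filter (fun z => z ≠ (⊥ : V) ∧ z ≤ w),
      (h z - h (par z)) := by
  induction w using WellFoundedLT.induction with
  | ind w IH =>
    by_cases hw : w = ⊥
    · subst hw
      have : Finset.univ.filter (fun z => z ≠ (⊥ : V) ∧ z ≤ ⊥) = ∅ := by
        ext z; simp (config := {contextual := true}) [le_bot_iff]
      simp [this]
    · have hset : Finset.univ.filter (fun z => z ≠ (⊥ : V) ∧ z ≤ w)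
          = insert w (Finset.univ.filter (fun z => z ≠ (⊥ : V) ∧ z ≤ par w)) := by
        ext z
        simp only [mem_filter, mem_univ, true_and, mem_insert]
        constructor
        · rintro ⟨hz, hzw⟩
          rcases eq_or_lt_of_le hzw with rfl | hlt
          · exact Or.inl rfl
          · exact Or.inr ⟨hz, hpar2 w z hlt⟩
        · rintro (rfl | ⟨hz, hzp⟩)
          · exact ⟨hw, le_refl _⟩
          · exact ⟨hz, hzp.trans (hpar1 w hw).le⟩
      have hnot : w ∉ Finset.univ.filter (fun z => z ≠ (⊥ : V) ∧ z ≤ par w) := by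
        simp only [mem_filter, mem_univ, true_and, not_and]
        intro _ hle
        exact absurd (lt_of_le_of_lt hle (hpar1 w hw)) (lt_irrefl w)
      rw [hset, Finset.sum_insert hnot]
      linear_combination IH (par w) (hpar1 w hw)

/-- Summation by parts on a finite rooted tree (modeled as a finite meet-semilattice with
bottom `⊥ = o` whose sets of ancestors are chains, with parent map `par`):
for all `h, f : T → ℂ`,
`Σ_{x,y} h(x∧y) f(x)conj(f(y)) = h(o)|I*f(o)|² + Σ_{z≠o} (h(z)-h(z⁻))|I*f(z)|²`,
where `I*f(z) = Σ_{τ ≥ z} f(τ)`. -/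
theorem tree_summation_by_parts {V : Type*} [Fintype V] [DecidableEq V]
    [SemilatticeInf V] [OrderBot V] [DecidableRel ((· ≤ ·) : V → V → Prop)]
    (hchain : ∀ x : V, IsChain (· ≤ ·) {y : V | y ≤ x})
    (par : V → V)
    (hpar1 : ∀ z : V, z ≠ ⊥ → par z < z)
    (hpar2 : ∀ z y : V, y < z → y ≤ par z)
    (h f : V → ℂ) :
    ∑ x : V, ∑ y : V, h (x ⊓ y) * f x * (starRingEnd ℂ) (f y) =
      h ⊥ * (Complex.normSq (∑ τ : V, f τ) : ℂ) +
        ∑ z ∈ Finset.univ.filter (· ≠ (⊥ : V)),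
          (h z - h (par z)) * (Complex.normSq (∑ τ ∈ Finset.univ.filter (z ≤ ·), f τ) : ℂ) := by
  have normSq_eq : ∀ s : ℂ, (Complex.normSq s : ℂ) = s * (starRingEnd ℂ) s := by
    intro s; rw [Complex.mul_conj]
  have key : ∀ x y : V, h (x ⊓ y) * f x * (starRingEnd ℂ) (f y)
      = h ⊥ * f x * (starRingEnd ℂ) (f y)
        + ∑ z ∈ Finset.univ.filter (· ≠ (⊥ : V)),
            (if z ≤ x ∧ z ≤ y then (h z - h (par z)) * f x * (starRingEnd ℂ) (f y) else 0) := by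
    intro x y
    have ht := tree_telescope par hpar1 hpar2 h (x ⊓ y)
    have hfil : Finset.univ.filter (fun z => z ≠ (⊥ : V) ∧ z ≤ x ⊓ y)
        = (Finset.univ.filter (· ≠ (⊥ : V))).filter (fun z => z ≤ x ∧ z ≤ y) := by
      ext z; simp [le_inf_iff, and_assoc]
    rw [ht, hfil, Finset.sum_filter, add_mul, add_mul, Finset.sum_mul, Finset.sum_mul]
    congr 1
    apply Finset.sum_congr rfl
    intro z _
    split <;> simp
  calc ∑ x : V, ∑ y : V, h (x ⊓ y) * f x * (starRingEnd ℂ) (f y)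
      = ∑ x : V, ∑ y : V, (h ⊥ * f x * (starRingEnd ℂ) (f y)
        + ∑ z ∈ Finset.univ.filter (· ≠ (⊥ : V)),
            (if z ≤ x ∧ z ≤ y then (h z - h (par z)) * f x * (starRingEnd ℂ) (f y) else 0)) := by
        exact Finset.sum_congr rfl fun x _ => Finset.sum_congr rfl fun y _ => key x y
    _ = (∑ x : V, ∑ y : V, h ⊥ * f x * (starRingEnd ℂ) (f y))
        + ∑ z ∈ Finset.univ.filter (· ≠ (⊥ : V)), ∑ x : V, ∑ y : V,
            (if z ≤ x ∧ z ≤ y then (h z - h (par z)) * f x * (starRingEnd ℂ) (f y) else 0) := by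
        simp only [Finset.sum_add_distrib]
        congr 1
        have h1 : (∑ x : V, ∑ y : V, ∑ z ∈ Finset.univ.filter (· ≠ (⊥ : V)),
              (if z ≤ x ∧ z ≤ y then (h z - h (par z)) * f x * (starRingEnd ℂ) (f y) else 0))
            = ∑ x : V, ∑ z ∈ Finset.univ.filter (· ≠ (⊥ : V)), ∑ y : V,
              (if z ≤ x ∧ z ≤ y then (h z - h (par z)) * f x * (starRingEnd ℂ) (f y) else 0) :=
          Finset.sum_congr rfl fun x _ => Finset.sum_comm
        rw [h1]
        exact Finset.sum_comm
    _ = h ⊥ * (Complex.normSq (∑ τ : V, f τ) : ℂ)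
        + ∑ z ∈ Finset.univ.filter (· ≠ (⊥ : V)),
          (h z - h (par z)) * (Complex.normSq (∑ τ ∈ Finset.univ.filter (z ≤ ·), f τ) : ℂ) := by
        congr 1
        · rw [normSq_eq, map_sum, Finset.sum_mul_sum, Finset.mul_sum]
          apply Finset.sum_congr rfl
          intro x _
          rw [Finset.mul_sum]
          apply Finset.sum_congr rfl
          intro y _
          ring
        · apply Finset.sum_congr rfl
          intro z _
          rw [normSq_eq, map_sum, Finset.sum_mul_sum, Finset.mul_sum]
          rw [Finset.sum_filter]
          apply Finset.sum_congr rfl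
          intro x _
          by_cases hx : z ≤ x
          · simp only [hx, if_true, true_and, Finset.mul_sum, Finset.sum_filter]
            apply Finset.sum_congr rfl
            intro y _
            by_cases hy : z ≤ y
            · simp only [hy, if_true]; ring
            · simp [hy]
          · simp [hx]
end
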